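/- arXiv:1210.4795 — 2 statements merged into one kernel-verified Lean document; each statement's English description precedes it below -/
import Mathlib

section
/- Let S be an n_t×n_t Hermitian positive semidefinite complex matrix, and let C = [C_1 C_2] be an invertible n_t×n_t complex matrix (C_1 having b columns) such that Cᴴ(S^{1/2}HᴴH S^{1/2} + I)C = blockdiag(Λ_1, Λ_2) with Λ_1, Λ_2 diagonal, and Cᴴ(S^{1/2}GᴴG S^{1/2} + I)C = I. If the column space of C_1 equals the column space of S, then Λ_2 = I; that is, the pencil (S^{1/2}HᴴH S^{1/2} + I, S^{1/2}GᴴG S^{1/2} + I) has no generalized eigenvalue less than one. -/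
/-!
Write `R = S^{1/2}` and `X = R (HᴴH - GᴴG) R`. Since `S = R Rᴴ`, the column space of `R` is that
of `S`, hence of `C₁`, so `X = C₁ M` for some `M`. Subtracting the two diagonalisations gives
`Cᴴ X C = blockdiag(Λ₁ - I, Λ₂ - I)`; its off-diagonal block says `C₁ᴴ C₁ M C₂ = 0`, which forces
`X C₂ = C₁ M C₂ = 0`, and then `Λ₂ - I = C₂ᴴ X C₂ = 0`.
-/

open Matrix
open scoped ComplexOrder

/-- The square root of a positive semidefinite matrix, as defined in Mathlib of December 2024
(removed since). -/
noncomputable def Matrix.PosSemidef.sqrt {n 𝕜 : Type*} [Fintype n] [RCLike 𝕜] [DecidableEq n]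
    {A : Matrix n n 𝕜} (hA : A.PosSemidef) : Matrix n n 𝕜 :=
  hA.1.eigenvectorUnitary.1 * diagonal ((↑) ∘ (√·) ∘ hA.1.eigenvalues) *
  (star hA.1.eigenvectorUnitary : Matrix n n 𝕜)

namespace Matrix

variable {m n p q : Type*}

section Sqrt

variable {𝕜 : Type*} [RCLike 𝕜] [Fintype n] [DecidableEq n] {A : Matrix n n 𝕜}
  (hA : A.PosSemidef)

theorem PosSemidef.sqrt_eq_conjStarAlgAut :
    hA.sqrt = Unitary.conjStarAlgAut 𝕜 _ hA.1.eigenvectorUnitary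
      (diagonal ((↑) ∘ (√·) ∘ hA.1.eigenvalues)) :=
  rfl

theorem PosSemidef.sqrt_mul_self : hA.sqrt * hA.sqrt = A := by
  conv_rhs => rw [hA.1.spectral_theorem]
  rw [sqrt_eq_conjStarAlgAut, ← map_mul, diagonal_mul_diagonal]
  congr 2
  ext i
  simp [← RCLike.ofReal_mul, Real.mul_self_sqrt (hA.eigenvalues_nonneg i)]

theorem PosSemidef.conjTranspose_sqrt : hA.sqrtᴴ = hA.sqrt := by
  rw [sqrt_eq_conjStarAlgAut, ← star_eq_conjTranspose, ← map_star, star_eq_conjTranspose,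
    diagonal_conjTranspose]
  congr 2
  ext i
  simp

end Sqrt

theorem range_mulVecLin_mul_conjTranspose {𝕜 : Type*} [RCLike 𝕜] [Fintype m] [Fintype n]
    (A : Matrix m n 𝕜) :
    LinearMap.range (A * Aᴴ).mulVecLin = LinearMap.range A.mulVecLin := by
  have hle : LinearMap.range (A * Aᴴ).mulVecLin ≤ LinearMap.range A.mulVecLin := by
    rw [mulVecLin_mul]
    exact LinearMap.range_comp_le_range _ _
  exact Submodule.eq_of_le_of_finrank_le hle (rank_self_mul_conjTranspose A).ge

theorem exists_eq_mul_of_range_mulVecLin_le {R : Type*} [CommSemiring R] [Fintype n] [Fintype p]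
    {A : Matrix m n R} {B : Matrix m p R}
    (h : LinearMap.range B.mulVecLin ≤ LinearMap.range A.mulVecLin) :
    ∃ N : Matrix n p R, B = A * N := by
  classical
  have hcol : ∀ j, ∃ v, A *ᵥ v = B.col j := fun j => h ⟨Pi.single j 1, B.mulVec_single_one j⟩
  choose v hv using hcol
  refine ⟨of fun i j => v j i, ?_⟩
  ext i j
  exact (congrFun (hv j) i).symm

theorem submatrix_conjTranspose_mul_mul {α : Type*} [NonUnitalNonAssocSemiring α] [StarRing α]
    [Fintype m] [Fintype n]
    (M : Matrix m m α) (C : Matrix m n α) (f : p → n) (g : q → n) :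
    (Cᴴ * M * C).submatrix f g = (C.submatrix id f)ᴴ * M * C.submatrix id g :=
  rfl

end Matrix

theorem stmt3_general {nr ne b c : ℕ}
    (H : Matrix (Fin nr) (Fin b ⊕ Fin c) ℂ) (G : Matrix (Fin ne) (Fin b ⊕ Fin c) ℂ)
    (S : Matrix (Fin b ⊕ Fin c) (Fin b ⊕ Fin c) ℂ) (hS : S.PosSemidef)
    (C : Matrix (Fin b ⊕ Fin c) (Fin b ⊕ Fin c) ℂ)
    (d₁ : Fin b → ℂ) (d₂ : Fin c → ℂ)
    (hHC : Cᴴ * (hS.sqrt * Hᴴ * H * hS.sqrt + 1) * C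
        = Matrix.fromBlocks (Matrix.diagonal d₁) 0 0 (Matrix.diagonal d₂))
    (hGC : Cᴴ * (hS.sqrt * Gᴴ * G * hS.sqrt + 1) * C = 1)
    (C₁ : Matrix (Fin b ⊕ Fin c) (Fin b) ℂ)
    (hC₁ : C₁ = C.submatrix id Sum.inl)
    (hspan : Submodule.span ℂ (Set.range fun j i => C₁ i j)
           = Submodule.span ℂ (Set.range fun j i => S i j)) :
    Matrix.diagonal d₂ = (1 : Matrix (Fin c) (Fin c) ℂ) := by
  set R := hS.sqrt
  set X := R * (Hᴴ * H - Gᴴ * G) * R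
  have hrange : LinearMap.range R.mulVecLin = LinearMap.range C₁.mulVecLin := by
    rw [← range_mulVecLin_mul_conjTranspose, hS.conjTranspose_sqrt, hS.sqrt_mul_self,
      range_mulVecLin, range_mulVecLin]
    exact hspan.symm
  obtain ⟨N, hRN⟩ := exists_eq_mul_of_range_mulVecLin_le hrange.le
  have hXC₁ : X = C₁ * (N * (Hᴴ * H - Gᴴ * G) * R) := by
    simp only [X, Matrix.mul_assoc]
    nth_rw 1 [hRN]
    simp only [Matrix.mul_assoc]
  have hCXC : Cᴴ * X * C = fromBlocks (diagonal d₁ - 1) 0 0 (diagonal d₂ - 1) := by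
    have hX : X = (R * Hᴴ * H * R + 1) - (R * Gᴴ * G * R + 1) := by
      simp only [X, Matrix.mul_sub, Matrix.sub_mul, Matrix.mul_assoc]
      abel
    rw [hX, Matrix.mul_sub, Matrix.sub_mul, hHC, hGC, ← fromBlocks_one, sub_eq_add_neg,
      fromBlocks_neg, fromBlocks_add]
    simp only [neg_zero, add_zero, ← sub_eq_add_neg]
  set C₂ := C.submatrix id Sum.inr
  have h₁₂ : C₁ᴴ * X * C₂ = 0 := by
    rw [hC₁, ← submatrix_conjTranspose_mul_mul, hCXC]
    rfl
  have h₂₂ : C₂ᴴ * X * C₂ = diagonal d₂ - 1 := by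
    rw [← submatrix_conjTranspose_mul_mul, hCXC]
    rfl
  have hXC₂ : X * C₂ = 0 := by
    rw [hXC₁, Matrix.mul_assoc, ← conjTranspose_mul_self_mul_eq_zero, Matrix.mul_assoc,
      ← Matrix.mul_assoc C₁, ← hXC₁, ← Matrix.mul_assoc, h₁₂]
  rw [← sub_eq_zero, ← h₂₂, Matrix.mul_assoc, hXC₂, Matrix.mul_zero]

/-- If the column space of `C₁` equals the column space of `S`, then `Λ₂ = I`:
the pencil `(S^{1/2}HᴴH S^{1/2}+I, S^{1/2}GᴴG S^{1/2}+I)` has no generalized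
eigenvalue less than one.  (The `n_t` transmit antennas are indexed by
`Fin b ⊕ Fin c`, matching the partition `C = [C₁ C₂]`.) -/
theorem stmt3 {nr ne b c : ℕ}
    (H : Matrix (Fin nr) (Fin b ⊕ Fin c) ℂ) (G : Matrix (Fin ne) (Fin b ⊕ Fin c) ℂ)
    (S : Matrix (Fin b ⊕ Fin c) (Fin b ⊕ Fin c) ℂ) (hS : S.PosSemidef)
    (C : Matrix (Fin b ⊕ Fin c) (Fin b ⊕ Fin c) ℂ) (hC : IsUnit C)
    (d₁ : Fin b → ℂ) (d₂ : Fin c → ℂ)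
    (hHC : Cᴴ * (hS.sqrt * Hᴴ * H * hS.sqrt + 1) * C
        = Matrix.fromBlocks (Matrix.diagonal d₁) 0 0 (Matrix.diagonal d₂))
    (hGC : Cᴴ * (hS.sqrt * Gᴴ * G * hS.sqrt + 1) * C = 1)
    (C₁ : Matrix (Fin b ⊕ Fin c) (Fin b) ℂ)
    (hC₁ : C₁ = C.submatrix id Sum.inl)
    (hspan : Submodule.span ℂ (Set.range fun j i => C₁ i j)
           = Submodule.span ℂ (Set.range fun j i => S i j)) :
    Matrix.diagonal d₂ = (1 : Matrix (Fin c) (Fin c) ℂ) :=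
  stmt3_general H G S hS C d₁ d₂ hHC hGC C₁ hC₁ hspan
end

section
/- Suppose HᴴH − GᴴG is positive definite and GᴴG is positive definite. Set S̄ = (HᴴH − GᴴG)^{-1}, and let Φ be unitary and D = diag(d_1,…,d_{n_t}) diagonal with S̄^{1/2}GᴴG S̄^{1/2} + I = ΦDΦᴴ (so d_i > 1 for all i). Then HᴴH · S̄^{1/2}Φ = GᴴG · S̄^{1/2}Φ · (I + (D − I)^{-1}); that is, the columns of S̄^{1/2}Φ are generalized eigenvectors of the pencil (HᴴH, GᴴG) with generalized eigenvalues d_i/(d_i − 1). Consequently Σ_{i=1}^{n_t} log(d_i/(d_i−1)) = log det(I + (D−I)^{-1}) = log det(HᴴH) − log det(GᴴG). -/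
/-!
Conjugating by `S = S̄^{1/2}` turns `HᴴH - GᴴG` into `I`, hence `GᴴG` into `Φ (D - I) Φᴴ` and
`HᴴH` into `Φ D Φᴴ`. Multiplying these congruences on the right by `Φ` and cancelling `S` on the
left gives the pencil equation. Taking determinants gives `det S ^ 2 * det (HᴴH) = ∏ dᵢ` and
`det S ^ 2 * det (GᴴG) = ∏ (dᵢ - 1)`; as `det S > 0` both determinants are real and positive,
and the logarithms of these two identities differ by `∑ log (dᵢ / (dᵢ - 1))`.
-/

open Matrix
open scoped ComplexOrder

theorem Complex.re_eq_div_sq_of_ofReal_sq_mul_eq {s t : ℝ} {z : ℂ} (hs : s ≠ 0)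
    (h : (s : ℂ) ^ 2 * z = t) : z.re = t / s ^ 2 := by
  have hz : z = ((t / s ^ 2 : ℝ) : ℂ) := by
    push_cast
    rw [eq_div_iff (by exact_mod_cast pow_ne_zero 2 hs), mul_comm, h]
  rw [hz, Complex.ofReal_re]

namespace Matrix

variable {n R : Type*} [Fintype n] [DecidableEq n] [CommRing R]

theorem mul_mul_eq_one_of_mul_self_eq_inv {S A : Matrix n n R} (hS : IsUnit S.det)
    (h : S * S = A⁻¹) : S * A * S = 1 := by
  have hA : IsUnit A.det := isUnit_nonsing_inv_det_iff.mp (by rw [← h, det_mul]; exact hS.mul hS)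
  rw [Matrix.mul_assoc]
  refine mul_eq_one_comm.mp ?_
  rw [Matrix.mul_assoc, h, mul_nonsing_inv _ hA]

theorem mul_mul_eq_mul_mul_one_add_inv_of_congr {M B S Φ Ψ D : Matrix n n R}
    (hS : IsUnit S.det) (hM : S * M * S = Φ * D * Ψ) (hB : S * B * S = Φ * (D - 1) * Ψ)
    (hΨΦ : Ψ * Φ = 1) (hD : IsUnit (D - 1).det) :
    M * (S * Φ) = B * (S * Φ) * (1 + (D - 1)⁻¹) := by
  refine ((isUnit_iff_isUnit_det S).mpr hS).mul_left_cancel ?_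
  calc S * (M * (S * Φ)) = S * M * S * Φ := by simp only [Matrix.mul_assoc]
    _ = Φ * ((D - 1) + (D - 1) * (D - 1)⁻¹) := by
      rw [hM, mul_nonsing_inv _ hD, sub_add_cancel, Matrix.mul_assoc, hΨΦ, Matrix.mul_one]
    _ = S * B * S * Φ * (1 + (D - 1)⁻¹) := by
      rw [hB, Matrix.mul_assoc _ Ψ, hΨΦ, Matrix.mul_one, Matrix.mul_assoc Φ,
        Matrix.mul_add (D - 1), Matrix.mul_one]
    _ = S * (B * (S * Φ) * (1 + (D - 1)⁻¹)) := by simp only [Matrix.mul_assoc]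

theorem det_sq_mul_det_eq_of_congr {S M Φ Ψ D : Matrix n n R} (h : S * M * S = Φ * D * Ψ)
    (hΦΨ : Φ * Ψ = 1) (hΨΦ : Ψ * Φ = 1) : S.det ^ 2 * M.det = D.det := by
  rw [← det_conj_of_mul_eq_one hΦΨ hΨΦ (N := D), ← h, det_mul, det_mul]
  ring

theorem one_add_inv_diagonal_sub_one {K : Type*} [Field K] {d : n → K}
    (hd : ∀ i, d i - 1 ≠ 0) : 1 + (diagonal d - 1)⁻¹ = diagonal fun i => d i / (d i - 1) := by
  have hinv : (diagonal d - 1)⁻¹ = diagonal fun i => (d i - 1)⁻¹ := by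
    refine inv_eq_right_inv ?_
    rw [← diagonal_one, diagonal_sub, diagonal_mul_diagonal]
    simp [hd]
  rw [hinv, ← diagonal_one, diagonal_add]
  congr 1
  funext i
  rw [inv_eq_one_div, one_add_div (hd i), sub_add_cancel]

theorem re_det_eq_prod_div_sq_of_congr {S M Φ Ψ : Matrix n n ℂ} {v : n → ℝ} {s : ℝ}
    (h : S * M * S = Φ * diagonal (fun i => (v i : ℂ)) * Ψ) (hΦΨ : Φ * Ψ = 1) (hΨΦ : Ψ * Φ = 1)
    (hsS : (s : ℂ) = S.det) (hs : s ≠ 0) : M.det.re = (∏ i, v i) / s ^ 2 := by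
  refine Complex.re_eq_div_sq_of_ofReal_sq_mul_eq hs ?_
  rw [hsS, det_sq_mul_det_eq_of_congr h hΦΨ hΨΦ, det_diagonal, Complex.ofReal_prod]

end Matrix

theorem Real.sum_log_div_sub_one_eq {ι : Type*} [Fintype ι] {d : ι → ℝ} (hd : ∀ i, 1 < d i)
    {c : ℝ} (hc : c ≠ 0) :
    ∑ i, Real.log (d i / (d i - 1))
      = Real.log ((∏ i, d i) / c) - Real.log ((∏ i, (d i - 1)) / c) := by
  have hd0 : ∀ i, d i ≠ 0 := fun i => (one_pos.trans (hd i)).ne'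
  have hd1 : ∀ i, d i - 1 ≠ 0 := fun i => (sub_pos.2 (hd i)).ne'
  rw [Real.log_div (Finset.prod_ne_zero_iff.mpr fun i _ => hd0 i) hc,
    Real.log_div (Finset.prod_ne_zero_iff.mpr fun i _ => hd1 i) hc, sub_sub_sub_cancel_right,
    Real.log_prod fun i _ => hd0 i, Real.log_prod fun i _ => hd1 i, ← Finset.sum_sub_distrib]
  exact Finset.sum_congr rfl fun i _ => Real.log_div (hd0 i) (hd1 i)

theorem stmt15_general {nr ne nt : ℕ}
    (H : Matrix (Fin nr) (Fin nt) ℂ) (G : Matrix (Fin ne) (Fin nt) ℂ)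
    (Sr : Matrix (Fin nt) (Fin nt) ℂ) (hSr : Sr.PosDef)
    (hSrsq : Sr * Sr = (Hᴴ * H - Gᴴ * G)⁻¹)
    (Φ : Matrix (Fin nt) (Fin nt) ℂ) (hΦ : Φ * Φᴴ = 1 ∧ Φᴴ * Φ = 1)
    (d : Fin nt → ℝ) (hd : ∀ i, 1 < d i)
    (DM : Matrix (Fin nt) (Fin nt) ℂ)
    (hDM : DM = Matrix.diagonal fun i => (d i : ℂ))
    (hDdecomp : Sr * (Gᴴ * G) * Sr + 1 = Φ * DM * Φᴴ) :
    Hᴴ * H * (Sr * Φ) = Gᴴ * G * (Sr * Φ) * (1 + (DM - 1)⁻¹) ∧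
    (∑ i : Fin nt, Real.log (d i / (d i - 1)))
      = Real.log ((1 + (Matrix.diagonal d - 1)⁻¹ : Matrix (Fin nt) (Fin nt) ℝ).det) ∧
    (∑ i : Fin nt, Real.log (d i / (d i - 1)))
      = Real.log ((Hᴴ * H).det.re) - Real.log ((Gᴴ * G).det.re) := by
  obtain ⟨hΦΦ', hΦ'Φ⟩ := hΦ
  have hd1 : ∀ i, d i - 1 ≠ 0 := fun i => (sub_pos.2 (hd i)).ne'
  have hS : IsUnit Sr.det := isUnit_iff_ne_zero.mpr hSr.det_pos.ne'
  have hHcongr : Sr * (Hᴴ * H) * Sr = Φ * DM * Φᴴ := by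
    rw [← hDdecomp, ← mul_mul_eq_one_of_mul_self_eq_inv hS hSrsq]
    noncomm_ring
  have hGcongr : Sr * (Gᴴ * G) * Sr = Φ * (DM - 1) * Φᴴ := by
    rw [Matrix.mul_sub, Matrix.sub_mul, Matrix.mul_one, hΦΦ', ← hDdecomp, add_sub_cancel_right]
  have hDM1 : DM - 1 = diagonal fun i => ((d i - 1 : ℝ) : ℂ) := by
    rw [hDM, ← diagonal_one, diagonal_sub]
    congr 1
    ext i
    simp
  refine ⟨mul_mul_eq_mul_mul_one_add_inv_of_congr hS hHcongr hGcongr hΦ'Φ ?_, ?_, ?_⟩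
  · rw [hDM1, det_diagonal, isUnit_iff_ne_zero, Finset.prod_ne_zero_iff]
    exact fun i _ => Complex.ofReal_ne_zero.mpr (hd1 i)
  · rw [one_add_inv_diagonal_sub_one hd1, det_diagonal,
      Real.log_prod fun i _ => (div_pos (one_pos.trans (hd i)) (sub_pos.2 (hd i))).ne']
  obtain ⟨s, hs, hsS⟩ : ∃ s : ℝ, 0 < s ∧ (s : ℂ) = Sr.det :=
    RCLike.pos_iff_exists_ofReal.mp hSr.det_pos
  rw [re_det_eq_prod_div_sq_of_congr (hDM ▸ hHcongr) hΦΦ' hΦ'Φ hsS hs.ne',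
    re_det_eq_prod_div_sq_of_congr (hDM1 ▸ hGcongr) hΦΦ' hΦ'Φ hsS hs.ne']
  exact Real.sum_log_div_sub_one_eq hd (pow_ne_zero 2 hs.ne')

/-- The columns of `S̄^{1/2}Φ` are generalized eigenvectors of the pencil
`(HᴴH, GᴴG)` with generalized eigenvalues `d_i/(d_i − 1)`, and
`Σᵢ log(d_i/(d_i−1)) = log det(I + (D−I)⁻¹) = log det(HᴴH) − log det(GᴴG)`. -/
theorem stmt15 {nr ne nt : ℕ}
    (H : Matrix (Fin nr) (Fin nt) ℂ) (G : Matrix (Fin ne) (Fin nt) ℂ)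
    (hHG : (Hᴴ * H - Gᴴ * G).PosDef) (hGG : (Gᴴ * G).PosDef)
    (Sr : Matrix (Fin nt) (Fin nt) ℂ) (hSr : Sr.PosDef)
    (hSrsq : Sr * Sr = (Hᴴ * H - Gᴴ * G)⁻¹)
    (Φ : Matrix (Fin nt) (Fin nt) ℂ) (hΦ : Φ * Φᴴ = 1 ∧ Φᴴ * Φ = 1)
    (d : Fin nt → ℝ) (hd : ∀ i, 1 < d i)
    (DM : Matrix (Fin nt) (Fin nt) ℂ)
    (hDM : DM = Matrix.diagonal fun i => (d i : ℂ))
    (hDdecomp : Sr * (Gᴴ * G) * Sr + 1 = Φ * DM * Φᴴ) :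
    Hᴴ * H * (Sr * Φ) = Gᴴ * G * (Sr * Φ) * (1 + (DM - 1)⁻¹) ∧
    (∑ i : Fin nt, Real.log (d i / (d i - 1)))
      = Real.log ((1 + (Matrix.diagonal d - 1)⁻¹ : Matrix (Fin nt) (Fin nt) ℝ).det) ∧
    (∑ i : Fin nt, Real.log (d i / (d i - 1)))
      = Real.log ((Hᴴ * H).det.re) - Real.log ((Gᴴ * G).det.re) :=
  stmt15_general H G Sr hSr hSrsq Φ hΦ d hd DM hDM hDdecomp
end
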